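/- Let Y be a good (x,y_1,y_2)-switch in an oriented graph D, and let S be an induced subdivision of ST_4 in D. Then S intersects Y in exactly one of: the path (x,y_1), the path (x,z,y_2), or the empty set. -/

import Mathlib

/-- `S` is a subdivision of `D` realized via the injection `φ` of branch vertices:
each arc `u → v` of `D` is replaced by a directed `(φ u, φ v)`-path `p u v h` of length
`n u v h ≥ 1`; the paths are internally disjoint, their internal vertices are new,
every vertex of `S` lies on some path, and the arcs of `S` are exactly the path arcs. -/
def IsSubdivisionVia {U W : Type*} (D : U → U → Prop) (S : W → W → Prop)
    (φ : U → W) (n : ∀ u v, D u v → ℕ)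
    (p : ∀ u v (h : D u v), Fin (n u v h + 1) → W) : Prop :=
  Function.Injective φ ∧
  (∀ u v (h : D u v), 1 ≤ n u v h) ∧
  (∀ u v (h : D u v), p u v h 0 = φ u ∧ p u v h (Fin.last _) = φ v) ∧
  (∀ u v (h : D u v), Function.Injective (p u v h)) ∧
  (∀ u v (h : D u v) (i : Fin (n u v h + 1)),
      0 < i.val → i.val < n u v h → ∀ z, p u v h i ≠ φ z) ∧
  (∀ u v (h : D u v) u' v' (h' : D u' v') (i : Fin (n u v h + 1))
      (j : Fin (n u' v' h' + 1)),
      0 < i.val → i.val < n u v h → 0 < j.val → j.val < n u' v' h' →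
      p u v h i = p u' v' h' j → u = u' ∧ v = v' ∧ i.val = j.val) ∧
  (∀ w : W, (∃ u, φ u = w) ∨ ∃ u, ∃ v, ∃ h : D u v, ∃ i, p u v h i = w) ∧
  (∀ a b : W, S a b ↔ ∃ u, ∃ v, ∃ h : D u v, ∃ i : Fin (n u v h),
      p u v h i.castSucc = a ∧ p u v h i.succ = b)

/-- `S` is a subdivision of the digraph `D`. -/
def IsSubdivision {U W : Type*} (D : U → U → Prop) (S : W → W → Prop) : Prop :=
  ∃ φ n p, IsSubdivisionVia D S φ n p

/-- The digraph `G` contains an induced subdivision of `D`: some vertex subset of `G`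
induces a subdivision of `D`. -/
def ContainsInducedSubdivision {U W : Type*} (D : U → U → Prop) (G : W → W → Prop) : Prop :=
  ∃ X : Set W, IsSubdivision D (fun a b : X => G a.1 b.1)

/-- The strong tournament `ST₄` on 4 vertices: the directed cycle `α γ β δ α`
(`0 → 1 → 2 → 3 → 0`) together with the chords `α → β` (`0 → 2`) and `γ → δ` (`1 → 3`). -/
def ST4 : Fin 4 → Fin 4 → Prop := fun a b =>
  (a = 0 ∧ b = 1) ∨ (a = 1 ∧ b = 2) ∨ (a = 2 ∧ b = 3) ∨ (a = 3 ∧ b = 0) ∨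
  (a = 0 ∧ b = 2) ∨ (a = 1 ∧ b = 3)

/-- `{x, z, y₁, y₂}` is a good `(x, y₁, y₂)`-switch in `D`: the four vertices are distinct,
the arcs of `D` among them are exactly `xz, xy₁, zy₁, zy₂, y₂y₁`, every arc of `D` entering
the switch has head `x`, and every arc of `D` leaving it has tail `y₁` or `y₂`. -/
def IsGoodSwitch {V : Type*} (D : V → V → Prop) (x z y₁ y₂ : V) : Prop :=
  (x ≠ z ∧ x ≠ y₁ ∧ x ≠ y₂ ∧ z ≠ y₁ ∧ z ≠ y₂ ∧ y₁ ≠ y₂) ∧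
  (∀ a b : V, a ∈ ({x, z, y₁, y₂} : Set V) → b ∈ ({x, z, y₁, y₂} : Set V) →
    (D a b ↔ ((a = x ∧ b = z) ∨ (a = x ∧ b = y₁) ∨ (a = z ∧ b = y₁) ∨
      (a = z ∧ b = y₂) ∨ (a = y₂ ∧ b = y₁)))) ∧
  (∀ w : V, w ∉ ({x, z, y₁, y₂} : Set V) → ∀ u ∈ ({x, z, y₁, y₂} : Set V), D w u → u = x) ∧
  (∀ u ∈ ({x, z, y₁, y₂} : Set V), ∀ w : V, w ∉ ({x, z, y₁, y₂} : Set V) → D u w →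
    u = y₁ ∨ u = y₂)

/-!
In a subdivision of `ST₄` every vertex has an in- and an out-neighbour, no vertex has three
in-neighbours, and a vertex with a unique in-neighbour `a` and a unique out-neighbour `c` cannot
be a branch vertex (each vertex of `ST₄` has in- or out-degree 2); so it is an inner vertex of a
subdivided arc, and since the subdivision is induced, `a → c` is not an arc.
In a good switch, arcs enter only at `x` and leave only from `y₁, y₂`, so the neighbours of a
switch vertex inside `S` are forced: `z` needs `x`, `y₂` needs `z`, and so on. All four vertices
would give `y₁` three in-neighbours, and `x, z, y₁` without `y₂` would make `z` a vertex as above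
with the chord `x → y₁`. What remains is `{x, y₁}`, `{x, z, y₂}` or `∅`.
-/

def OutDegLeTwo {α : Type*} (G : α → α → Prop) : Prop :=
  ∀ a b₁ b₂ b₃, G a b₁ → G a b₂ → G a b₃ → b₁ = b₂ ∨ b₁ = b₃ ∨ b₂ = b₃

namespace IsSubdivisionVia

variable {U W : Type*} {D : U → U → Prop} {S : W → W → Prop} {φ : U → W}
  {n : ∀ u v, D u v → ℕ} {p : ∀ u v (h : D u v), Fin (n u v h + 1) → W} {u v u' v' : U}

theorem one_le (hsub : IsSubdivisionVia D S φ n p) (h : D u v) : 1 ≤ n u v h :=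
  hsub.2.1 u v h

theorem apply_zero (hsub : IsSubdivisionVia D S φ n p) (h : D u v) : p u v h 0 = φ u :=
  (hsub.2.2.1 u v h).1

theorem apply_last (hsub : IsSubdivisionVia D S φ n p) (h : D u v) :
    p u v h (Fin.last _) = φ v :=
  (hsub.2.2.1 u v h).2

theorem apply_injective (hsub : IsSubdivisionVia D S φ n p) (h : D u v) :
    Function.Injective (p u v h) :=
  hsub.2.2.2.1 u v h

theorem apply_ne_branch (hsub : IsSubdivisionVia D S φ n p) (h : D u v)
    {i : Fin (n u v h + 1)} (hi0 : 0 < i.val) (hin : i.val < n u v h) (w : U) :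
    p u v h i ≠ φ w :=
  hsub.2.2.2.2.1 u v h i hi0 hin w

theorem adj_iff (hsub : IsSubdivisionVia D S φ n p) {a b : W} :
    S a b ↔ ∃ u v h, ∃ i : Fin (n u v h), p u v h i.castSucc = a ∧ p u v h i.succ = b :=
  hsub.2.2.2.2.2.2.2 a b

theorem reverse (hsub : IsSubdivisionVia D S φ n p) :
    IsSubdivisionVia (fun a b => D b a) (fun a b => S b a) φ (fun u v h => n v u h)
      (fun u v h => p v u h ∘ Fin.rev) := by
  obtain ⟨hφ, hn, hend, hinj, hint, hdisj, hcov, hadj⟩ := hsub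
  refine ⟨hφ, fun u v h => hn v u h, fun u v h => by simp [hend],
    fun u v h => (hinj v u h).comp Fin.rev_injective, ?_, ?_, ?_, ?_⟩
  · intro u v h i hi0 hin w
    simp only at hi0 hin
    exact hint v u h i.rev (by simp only [Fin.val_rev]; omega) (by simp only [Fin.val_rev]; omega) w
  · intro u v h u' v' h' i j hi0 hin hj0 hjn he
    simp only at hi0 hin hj0 hjn
    obtain ⟨rfl, rfl, hij⟩ :=
      hdisj v u h v' u' h' i.rev j.rev (by simp only [Fin.val_rev]; omega)
        (by simp only [Fin.val_rev]; omega) (by simp only [Fin.val_rev]; omega)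
        (by simp only [Fin.val_rev]; omega) he
    exact ⟨rfl, rfl, by simp only [Fin.val_rev] at hij; omega⟩
  · intro w
    exact (hcov w).imp id fun ⟨u, v, h, i, hi⟩ => ⟨v, u, h, i.rev, by simpa using hi⟩
  · intro a b
    show S b a ↔ _
    rw [hadj b a]
    constructor
    · rintro ⟨u, v, h, i, hi, hi'⟩
      exact ⟨v, u, h, i.rev, by simpa [Fin.rev_castSucc, Fin.rev_succ] using hi',
        by simpa [Fin.rev_castSucc, Fin.rev_succ] using hi⟩
    · rintro ⟨u, v, h, i, hi, hi'⟩
      exact ⟨v, u, h, i.rev, by simpa [Fin.rev_castSucc, Fin.rev_succ] using hi',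
        by simpa [Fin.rev_castSucc, Fin.rev_succ] using hi⟩

theorem apply_eq_branch (hsub : IsSubdivisionVia D S φ n p) {h : D u v}
    {i : Fin (n u v h + 1)} {w : U} (he : p u v h i = φ w) :
    (i.val = 0 ∧ w = u) ∨ (i.val = n u v h ∧ w = v) := by
  rcases Nat.eq_zero_or_pos i.val with h0 | hpos
  · obtain rfl : i = 0 := Fin.ext h0
    exact Or.inl ⟨h0, hsub.1 (he.symm.trans (hsub.apply_zero h))⟩
  · by_cases hlt : i.val < n u v h
    · exact absurd he (hsub.apply_ne_branch h hpos hlt w)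
    · obtain rfl : i = Fin.last _ := Fin.ext (by have := i.isLt; rw [Fin.val_last]; omega)
      exact Or.inr ⟨rfl, hsub.1 (he.symm.trans (hsub.apply_last h))⟩

theorem exists_eq_branch (hsub : IsSubdivisionVia D S φ n p) {h : D u v}
    {i : Fin (n u v h + 1)} (hi : ¬(0 < i.val ∧ i.val < n u v h)) : ∃ w, p u v h i = φ w := by
  rcases Nat.eq_zero_or_pos i.val with h0 | hpos
  · obtain rfl : i = 0 := Fin.ext h0
    exact ⟨u, hsub.apply_zero h⟩
  · obtain rfl : i = Fin.last _ := Fin.ext (by have := i.isLt; rw [Fin.val_last]; omega)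
    exact ⟨v, hsub.apply_last h⟩

theorem exists_branch_or_internal (hsub : IsSubdivisionVia D S φ n p) (w : W) :
    (∃ u, w = φ u) ∨
      ∃ u v h, ∃ i : Fin (n u v h + 1), 0 < i.val ∧ i.val < n u v h ∧ w = p u v h i := by
  rcases hsub.2.2.2.2.2.2.1 w with ⟨u, rfl⟩ | ⟨u, v, h, i, rfl⟩
  · exact Or.inl ⟨u, rfl⟩
  · by_cases hi : 0 < i.val ∧ i.val < n u v h
    · exact Or.inr ⟨u, v, h, i, hi.1, hi.2, rfl⟩
    · obtain ⟨w, hw⟩ := hsub.exists_eq_branch hi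
      exact Or.inl ⟨w, hw⟩

theorem eq_of_apply_eq_of_internal (hsub : IsSubdivisionVia D S φ n p) {h : D u v}
    {h' : D u' v'} {i : Fin (n u v h + 1)} {j : Fin (n u' v' h' + 1)} (hi0 : 0 < i.val)
    (hin : i.val < n u v h) (he : p u v h i = p u' v' h' j) :
    u = u' ∧ v = v' ∧ i.val = j.val := by
  by_cases hj : 0 < j.val ∧ j.val < n u' v' h'
  · exact hsub.2.2.2.2.2.1 u v h u' v' h' i j hi0 hin hj.1 hj.2 he
  · obtain ⟨w, hw⟩ := hsub.exists_eq_branch hj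
    exact absurd (he.trans hw) (hsub.apply_ne_branch h hi0 hin w)

theorem adj_succ (hsub : IsSubdivisionVia D S φ n p) {h : D u v} {i : Fin (n u v h + 1)}
    (hi : i.val < n u v h) : S (p u v h i) (p u v h ⟨i.val + 1, by omega⟩) :=
  hsub.adj_iff.2 ⟨u, v, h, ⟨i.val, hi⟩, rfl, rfl⟩

theorem eq_succ_of_adj (hsub : IsSubdivisionVia D S φ n p) {h : D u v}
    {i : Fin (n u v h + 1)} {b : W} (hi0 : 0 < i.val) (hin : i.val < n u v h)
    (hb : S (p u v h i) b) : b = p u v h ⟨i.val + 1, by omega⟩ := by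
  obtain ⟨u', v', h', j, hj, rfl⟩ := hsub.adj_iff.1 hb
  obtain ⟨rfl, rfl, hij⟩ := hsub.eq_of_apply_eq_of_internal hi0 hin hj.symm
  exact congrArg _ (Fin.ext (by simp [hij]))

theorem eq_pred_of_adj (hsub : IsSubdivisionVia D S φ n p) {h : D u v}
    {i : Fin (n u v h + 1)} {b : W} (hi0 : 0 < i.val) (hin : i.val < n u v h)
    (hb : S b (p u v h i)) : b = p u v h ⟨i.val - 1, by omega⟩ := by
  obtain ⟨u', v', h', j, rfl, hj⟩ := hsub.adj_iff.1 hb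
  obtain ⟨rfl, rfl, hij⟩ := hsub.eq_of_apply_eq_of_internal hi0 hin hj.symm
  exact congrArg _ (Fin.ext (by rw [Fin.val_succ] at hij; rw [Fin.val_castSucc]; dsimp only; omega))

theorem adj_branch_iff (hsub : IsSubdivisionVia D S φ n p) {b : W} :
    S (φ u) b ↔ ∃ v h, ∃ i : Fin (n u v h + 1), i.val = 1 ∧ p u v h i = b := by
  constructor
  · intro hb
    obtain ⟨u', v', h', j, hj, rfl⟩ := hsub.adj_iff.1 hb
    obtain ⟨hj0, rfl⟩ | ⟨hjn, -⟩ := hsub.apply_eq_branch hj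
    · exact ⟨v', h', j.succ, by rw [Fin.val_castSucc] at hj0; rw [Fin.val_succ, hj0], rfl⟩
    · rw [Fin.val_castSucc] at hjn; omega
  · rintro ⟨v, h, i, hi, rfl⟩
    convert hsub.adj_succ (i := 0) (hsub.one_le h) using 2
    · exact (hsub.apply_zero h).symm
    · exact Fin.ext (by simp [hi])

theorem eq_of_apply_eq_of_val_eq_one (hsub : IsSubdivisionVia D S φ n p) {h : D u v}
    {h' : D u v'} {i : Fin (n u v h + 1)} {j : Fin (n u v' h' + 1)} (hi : i.val = 1)
    (hj : j.val = 1) (he : p u v h i = p u v' h' j) : v = v' := by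
  by_cases hin : 1 < n u v h
  · exact (hsub.eq_of_apply_eq_of_internal (by omega) (by omega) he).2.1
  · obtain rfl : i = Fin.last _ := Fin.ext (by have := hsub.one_le h; rw [Fin.val_last]; omega)
    rw [hsub.apply_last h] at he
    obtain ⟨hj0, -⟩ | ⟨-, rfl⟩ := hsub.apply_eq_branch he.symm
    · omega
    · rfl

theorem not_adj_apply_add_two (hsub : IsSubdivisionVia D S φ n p) {h : D u v}
    {k : Fin (n u v h + 1)} (hk : k.val + 2 ≤ n u v h) :
    ¬S (p u v h k) (p u v h ⟨k.val + 2, by omega⟩) := by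
  intro hS
  rcases Nat.eq_zero_or_pos k.val with hk0 | hkpos
  · by_cases h2 : k.val + 2 < n u v h
    · have := Fin.val_eq_of_eq (hsub.apply_injective h (hsub.eq_pred_of_adj (by simp) h2 hS))
      simp at this
    · have hlast : (⟨k.val + 2, by omega⟩ : Fin (n u v h + 1)) = Fin.last _ :=
        Fin.ext (by rw [Fin.val_last]; dsimp only; omega)
      rw [hlast, show k = 0 from Fin.ext hk0, hsub.apply_zero h, hsub.apply_last h] at hS
      obtain ⟨u', v', h', j, hj, hj'⟩ := hsub.adj_iff.1 hS
      obtain ⟨hj0, rfl⟩ | ⟨hjn, -⟩ := hsub.apply_eq_branch hj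
      · obtain ⟨hj0', -⟩ | ⟨hjn, rfl⟩ := hsub.apply_eq_branch hj'
        · simp at hj0'
        · have : n u v h' = n u v h := rfl
          rw [Fin.val_castSucc] at hj0; rw [Fin.val_succ] at hjn; omega
      · rw [Fin.val_castSucc] at hjn; omega
  · have := Fin.val_eq_of_eq (hsub.apply_injective h (hsub.eq_succ_of_adj hkpos (by omega) hS))
    simp at this

theorem exists_adj (hsub : IsSubdivisionVia D S φ n p) (hD : ∀ u, ∃ v, D u v) (w : W) :
    ∃ b, S w b := by
  rcases hsub.exists_branch_or_internal w with ⟨u, rfl⟩ | ⟨u, v, h, i, -, hin, rfl⟩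
  · obtain ⟨v, h⟩ := hD u
    exact ⟨_, hsub.adj_branch_iff.2 ⟨v, h, ⟨1, by have := hsub.one_le h; omega⟩, rfl, rfl⟩⟩
  · exact ⟨_, hsub.adj_succ hin⟩

theorem outDegLeTwo (hsub : IsSubdivisionVia D S φ n p) (hD : OutDegLeTwo D) :
    OutDegLeTwo S := by
  intro w b₁ b₂ b₃ h₁ h₂ h₃
  rcases hsub.exists_branch_or_internal w with ⟨u, rfl⟩ | ⟨u, v, h, i, hi0, hin, rfl⟩
  · obtain ⟨v₁, k₁, i₁, hi₁, rfl⟩ := hsub.adj_branch_iff.1 h₁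
    obtain ⟨v₂, k₂, i₂, hi₂, rfl⟩ := hsub.adj_branch_iff.1 h₂
    obtain ⟨v₃, k₃, i₃, hi₃, rfl⟩ := hsub.adj_branch_iff.1 h₃
    rcases hD u v₁ v₂ v₃ k₁ k₂ k₃ with rfl | rfl | rfl
    · exact Or.inl (congrArg _ (Fin.ext (hi₁.trans hi₂.symm)))
    · exact Or.inr (Or.inl (congrArg _ (Fin.ext (hi₁.trans hi₃.symm))))
    · exact Or.inr (Or.inr (congrArg _ (Fin.ext (hi₂.trans hi₃.symm))))
  · exact Or.inl ((hsub.eq_succ_of_adj hi0 hin h₁).trans (hsub.eq_succ_of_adj hi0 hin h₂).symm)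

theorem exists_adj_ne_of_adj_ne (hsub : IsSubdivisionVia D S φ n p) (h : D u v)
    (h' : D u v') (hne : v ≠ v') : ∃ b b', b ≠ b' ∧ S (φ u) b ∧ S (φ u) b' :=
  ⟨_, _, fun he => hne (hsub.eq_of_apply_eq_of_val_eq_one rfl rfl he),
    hsub.adj_branch_iff.2 ⟨v, h, ⟨1, by have := hsub.one_le h; omega⟩, rfl, rfl⟩,
    hsub.adj_branch_iff.2 ⟨v', h', ⟨1, by have := hsub.one_le h'; omega⟩, rfl, rfl⟩⟩

theorem not_adj_of_forall_adj_eq (hsub : IsSubdivisionVia D S φ n p)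
    (hD : ∀ u, (∃ v v', v ≠ v' ∧ D u v ∧ D u v') ∨ ∃ v v', v ≠ v' ∧ D v u ∧ D v' u)
    {w a c : W} (ha : ∀ b, S b w → b = a) (hc : ∀ b, S w b → b = c) : ¬S a c := by
  rcases hsub.exists_branch_or_internal w with ⟨u, rfl⟩ | ⟨u, v, h, i, hi0, hin, rfl⟩
  · exfalso
    rcases hD u with ⟨v, v', hne, h, h'⟩ | ⟨v, v', hne, h, h'⟩
    · obtain ⟨b, b', hbb, hb, hb'⟩ := hsub.exists_adj_ne_of_adj_ne h h' hne
      exact hbb ((hc b hb).trans (hc b' hb').symm)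
    · obtain ⟨b, b', hbb, hb, hb'⟩ := hsub.reverse.exists_adj_ne_of_adj_ne h h' hne
      exact hbb ((ha b hb).trans (ha b' hb').symm)
  · have hpred : S (p u v h ⟨i.val - 1, by omega⟩) (p u v h i) := by
      convert hsub.adj_succ (h := h) (i := ⟨i.val - 1, by omega⟩) (by dsimp only; omega) using 2
      ext; dsimp only; omega
    rw [← ha _ hpred, ← hc _ (hsub.adj_succ hin)]
    convert hsub.not_adj_apply_add_two (h := h) (k := ⟨i.val - 1, by omega⟩) (by dsimp only; omega)
      using 3
    ext; dsimp only; omega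

end IsSubdivisionVia

instance : DecidableRel ST4 := fun a b => by unfold ST4; infer_instance

namespace ST4

theorem exists_adj_right : ∀ u, ∃ v, ST4 u v := by decide

theorem exists_adj_left : ∀ v, ∃ u, ST4 u v := by decide

theorem outDegLeTwo_flip : OutDegLeTwo (fun a b => ST4 b a) := by
  unfold OutDegLeTwo; decide

theorem exists_two_out_or_two_in :
    ∀ u, (∃ v v', v ≠ v' ∧ ST4 u v ∧ ST4 u v') ∨ ∃ v v', v ≠ v' ∧ ST4 v u ∧ ST4 v' u := by
  decide

end ST4

namespace IsGoodSwitch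

variable {V : Type*} {D : V → V → Prop} {x z y₁ y₂ a b : V}

theorem mem_of_adj_of_ne_x (hY : IsGoodSwitch D x z y₁ y₂) (hab : D a b)
    (hb : b ∈ ({x, z, y₁, y₂} : Set V)) (hbx : b ≠ x) : a ∈ ({x, z, y₁, y₂} : Set V) :=
  by_contra fun ha => hbx (hY.2.2.1 a ha b hb hab)

theorem mem_of_adj_of_ne_y (hY : IsGoodSwitch D x z y₁ y₂) (hab : D a b)
    (ha : a ∈ ({x, z, y₁, y₂} : Set V)) (ha₁ : a ≠ y₁) (ha₂ : a ≠ y₂) :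
    b ∈ ({x, z, y₁, y₂} : Set V) :=
  by_contra fun hb => (hY.2.2.2 a ha b hb hab).elim ha₁ ha₂

theorem eq_x_of_adj_z (hY : IsGoodSwitch D x z y₁ y₂) (h : D a z) : a = x := by
  have := (hY.2.1 a z (hY.mem_of_adj_of_ne_x h (by simp) hY.1.1.symm) (by simp)).1 h
  have := hY.1
  grind

theorem eq_z_of_adj_y₂ (hY : IsGoodSwitch D x z y₁ y₂) (h : D a y₂) : a = z := by
  have := (hY.2.1 a y₂ (hY.mem_of_adj_of_ne_x h (by simp) hY.1.2.2.1.symm) (by simp)).1 h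
  have := hY.1
  grind

theorem eq_of_adj_y₁ (hY : IsGoodSwitch D x z y₁ y₂) (h : D a y₁) : a = x ∨ a = z ∨ a = y₂ := by
  have := (hY.2.1 a y₁ (hY.mem_of_adj_of_ne_x h (by simp) hY.1.2.1.symm) (by simp)).1 h
  have := hY.1
  grind

theorem eq_of_x_adj (hY : IsGoodSwitch D x z y₁ y₂) (h : D x b) : b = z ∨ b = y₁ := by
  have := (hY.2.1 x b (by simp) (hY.mem_of_adj_of_ne_y h (by simp) hY.1.2.1 hY.1.2.2.1)).1 h
  have := hY.1
  grind

theorem eq_of_z_adj (hY : IsGoodSwitch D x z y₁ y₂) (h : D z b) : b = y₁ ∨ b = y₂ := by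
  have := (hY.2.1 z b (by simp) (hY.mem_of_adj_of_ne_y h (by simp) hY.1.2.2.2.1 hY.1.2.2.2.2.1)).1 h
  have := hY.1
  grind

theorem x_adj_y₁ (hY : IsGoodSwitch D x z y₁ y₂) : D x y₁ :=
  (hY.2.1 x y₁ (by simp) (by simp)).2 (by simp)

theorem z_adj_y₁ (hY : IsGoodSwitch D x z y₁ y₂) : D z y₁ :=
  (hY.2.1 z y₁ (by simp) (by simp)).2 (by simp)

theorem y₂_adj_y₁ (hY : IsGoodSwitch D x z y₁ y₂) : D y₂ y₁ :=
  (hY.2.1 y₂ y₁ (by simp) (by simp)).2 (by simp)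

theorem inter_eq_or_eq_or_eq_empty (hY : IsGoodSwitch D x z y₁ y₂) {X : Set V}
    (hout : ∀ w : X, ∃ b : X, D w b) (hin : ∀ w : X, ∃ a : X, D a w)
    (hindeg : OutDegLeTwo fun a b : X => D b a)
    (hchord : ∀ w a c : X, (∀ b : X, D b w → b = a) → (∀ b : X, D w b → b = c) → ¬ D a c) :
    X ∩ {x, z, y₁, y₂} = {x, y₁} ∨ X ∩ {x, z, y₁, y₂} = {x, z, y₂} ∨
      X ∩ {x, z, y₁, y₂} = ∅ := by
  have hzx : z ∈ X → x ∈ X := fun hz => by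
    obtain ⟨⟨a, ha⟩, had⟩ := hin ⟨z, hz⟩
    exact hY.eq_x_of_adj_z had ▸ ha
  have hy₂z : y₂ ∈ X → z ∈ X := fun hy₂ => by
    obtain ⟨⟨a, ha⟩, had⟩ := hin ⟨y₂, hy₂⟩
    exact hY.eq_z_of_adj_y₂ had ▸ ha
  have hy₁ : y₁ ∈ X → x ∈ X ∨ z ∈ X ∨ y₂ ∈ X := fun hy₁ => by
    obtain ⟨⟨a, ha⟩, had⟩ := hin ⟨y₁, hy₁⟩
    rcases hY.eq_of_adj_y₁ had with rfl | rfl | rfl <;> simp [ha]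
  have hx : x ∈ X → z ∈ X ∨ y₁ ∈ X := fun hx => by
    obtain ⟨⟨b, hb⟩, hbd⟩ := hout ⟨x, hx⟩
    rcases hY.eq_of_x_adj hbd with rfl | rfl <;> simp [hb]
  have hz : z ∈ X → y₁ ∈ X ∨ y₂ ∈ X := fun hz => by
    obtain ⟨⟨b, hb⟩, hbd⟩ := hout ⟨z, hz⟩
    rcases hY.eq_of_z_adj hbd with rfl | rfl <;> simp [hb]
  have hall : ¬(x ∈ X ∧ z ∈ X ∧ y₁ ∈ X ∧ y₂ ∈ X) := fun ⟨hx, hz, hy₁, hy₂⟩ => by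
    obtain ⟨hxz, -, hxy₂, -, hzy₂, -⟩ := hY.1
    have := hindeg ⟨y₁, hy₁⟩ ⟨x, hx⟩ ⟨z, hz⟩ ⟨y₂, hy₂⟩ hY.x_adj_y₁ hY.z_adj_y₁ hY.y₂_adj_y₁
    simp [hxz, hxy₂, hzy₂] at this
  have hxzy₁ : ¬(x ∈ X ∧ z ∈ X ∧ y₁ ∈ X ∧ y₂ ∉ X) := fun ⟨hx, hz, hy₁, hy₂⟩ =>
    hchord ⟨z, hz⟩ ⟨x, hx⟩ ⟨y₁, hy₁⟩ (fun _ hbd => Subtype.ext (hY.eq_x_of_adj_z hbd))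
      (fun ⟨b, hb⟩ hbd => Subtype.ext <| (hY.eq_of_z_adj hbd).resolve_right fun h => hy₂ (h ▸ hb))
      hY.x_adj_y₁
  have : (x ∈ X ∧ y₁ ∈ X ∧ z ∉ X ∧ y₂ ∉ X) ∨ (x ∈ X ∧ z ∈ X ∧ y₂ ∈ X ∧ y₁ ∉ X) ∨
      (x ∉ X ∧ z ∉ X ∧ y₁ ∉ X ∧ y₂ ∉ X) := by
    grind
  rcases this with ⟨hx, hy₁, hz, hy₂⟩ | ⟨hx, hz, hy₂, hy₁⟩ | ⟨hx, hz, hy₁, hy₂⟩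
  · left
    rw [Set.inter_insert_of_mem hx, Set.inter_insert_of_notMem hz, Set.inter_insert_of_mem hy₁,
      Set.inter_singleton_eq_empty.2 hy₂, insert_empty_eq]
  · right; left
    rw [Set.inter_insert_of_mem hx, Set.inter_insert_of_mem hz, Set.inter_insert_of_notMem hy₁,
      Set.inter_singleton_of_mem hy₂]
  · right; right
    rw [Set.inter_insert_of_notMem hx, Set.inter_insert_of_notMem hz,
      Set.inter_insert_of_notMem hy₁, Set.inter_singleton_eq_empty.2 hy₂]

end IsGoodSwitch

theorem stmt15_general {V : Type} (D : V → V → Prop)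
    (x z y₁ y₂ : V) (hswitch : IsGoodSwitch D x z y₁ y₂)
    (X : Set V) (hS : IsSubdivision ST4 (fun a b : X => D a.1 b.1)) :
    X ∩ ({x, z, y₁, y₂} : Set V) = {x, y₁} ∨
    X ∩ ({x, z, y₁, y₂} : Set V) = {x, z, y₂} ∨
    X ∩ ({x, z, y₁, y₂} : Set V) = (∅ : Set V) := by
  obtain ⟨φ, n, p, hsub⟩ := hS
  exact hswitch.inter_eq_or_eq_or_eq_empty (hsub.exists_adj ST4.exists_adj_right)
    (hsub.reverse.exists_adj ST4.exists_adj_left) (hsub.reverse.outDegLeTwo ST4.outDegLeTwo_flip)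
    fun _ _ _ => hsub.not_adj_of_forall_adj_eq ST4.exists_two_out_or_two_in

/-- Let `{x, z, y₁, y₂}` be a good `(x, y₁, y₂)`-switch in an oriented graph `D`, and let
`X` induce a subdivision of `ST₄` in `D`.  Then the subdivision intersects the switch in
exactly one of: the path `(x, y₁)`, the path `(x, z, y₂)`, or the empty set. -/
theorem stmt15 {V : Type} (D : V → V → Prop) (horient : ∀ a b, D a b → ¬ D b a)
    (x z y₁ y₂ : V) (hswitch : IsGoodSwitch D x z y₁ y₂)
    (X : Set V) (hS : IsSubdivision ST4 (fun a b : X => D a.1 b.1)) :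
    X ∩ ({x, z, y₁, y₂} : Set V) = {x, y₁} ∨
    X ∩ ({x, z, y₁, y₂} : Set V) = {x, z, y₂} ∨
    X ∩ ({x, z, y₁, y₂} : Set V) = (∅ : Set V) :=
  stmt15_general D x z y₁ y₂ hswitch X hS
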